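/- Let λ̃ ≥ 0, μ̃ > 0, α ∈ ℝ, z₃ ∈ ℝ, π⁰ ∈ ℝ, let A ∈ Sym(2,ℝ) be positive definite, ρ, γ̄ ∈ Sym(2,ℝ), and let γ⁰ ∈ Sym(3,ℝ) have upper-left block γ̄ − z₃ ρ, entries γ⁰_{13} = γ⁰_{23} = 0, and γ⁰_{33} = (α/(λ̃+2μ̃)) π⁰ − (λ̃/(λ̃+2μ̃)) A : (γ̄ − z₃ ρ). Let Q ∈ GL(3,ℝ) with QᵀQ = blockdiag(A,1), and let CE = λ̃ tr(E) I + 2μ̃ E on Sym(3,ℝ). Then C(Qγ⁰Qᵀ) : (Qγ⁰Qᵀ) = C̃(A γ̄) : (γ̄ A) + z₃² C̃(Aρ) : (ρA) − 2 z₃ C̃(Aγ̄):(ρA) + (α²/(λ̃+2μ̃)) (π⁰)², where C̃E = 2μ̃ (λ̃/(λ̃+2μ̃)) tr(E) I + 2μ̃ E on Sym(2,ℝ). -/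

import Mathlib

open Matrix

/-- Frobenius inner product `A : B = tr(A Bᵀ)`. -/
noncomputable def frob {n : ℕ} (A B : Matrix (Fin n) (Fin n) ℝ) : ℝ :=
  (A * Bᵀ).trace

/-- The 3D elasticity tensor `CE = λ̃ tr(E) I + 2μ̃ E`. -/
noncomputable def C3 (lam mu : ℝ) (E : Matrix (Fin 3) (Fin 3) ℝ) :
    Matrix (Fin 3) (Fin 3) ℝ :=
  (lam * E.trace) • (1 : Matrix (Fin 3) (Fin 3) ℝ) + (2 * mu) • E

/-- The 2D shell elasticity tensor `C̃E = 2μ̃ (λ̃/(λ̃+2μ̃)) tr(E) I + 2μ̃ E`. -/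
noncomputable def Ct (lam mu : ℝ) (E : Matrix (Fin 2) (Fin 2) ℝ) :
    Matrix (Fin 2) (Fin 2) ℝ :=
  (2 * mu * (lam / (lam + 2 * mu)) * E.trace) • (1 : Matrix (Fin 2) (Fin 2) ℝ) +
    (2 * mu) • E

/-- Block diagonal matrix `blockdiag(A, 1)`. -/
def bd (A : Matrix (Fin 2) (Fin 2) ℝ) : Matrix (Fin 3) (Fin 3) ℝ :=
  !![A 0 0, A 0 1, 0; A 1 0, A 1 1, 0; 0, 0, 1]

/-- Pointwise 3D elastic energy identity for the constrained strain `γ⁰`: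
`C(Qγ⁰Qᵀ) : (Qγ⁰Qᵀ) = C̃(Aγ̄):(γ̄A) + z₃² C̃(Aρ):(ρA) − 2z₃ C̃(Aγ̄):(ρA) + (α²/(λ̃+2μ̃))(π⁰)²`. -/
theorem stmt8 (lam mu α z3 π0 : ℝ) (hlam : 0 ≤ lam) (hmu : 0 < mu)
    (A : Matrix (Fin 2) (Fin 2) ℝ) (hAsym : A.IsSymm) (hApd : A.PosDef)
    (ρ gb : Matrix (Fin 2) (Fin 2) ℝ) (hρ : ρ.IsSymm) (hgb : gb.IsSymm)
    (Q : Matrix (Fin 3) (Fin 3) ℝ) (hQ : IsUnit Q.det)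
    (hQTQ : Qᵀ * Q = bd A)
    (B : Matrix (Fin 2) (Fin 2) ℝ) (hB : B = gb - z3 • ρ)
    (g33 : ℝ)
    (hg33 : g33 = (α / (lam + 2 * mu)) * π0 - (lam / (lam + 2 * mu)) * frob A B)
    (γ0 : Matrix (Fin 3) (Fin 3) ℝ)
    (hγ0 : γ0 = !![B 0 0, B 0 1, 0; B 1 0, B 1 1, 0; 0, 0, g33]) :
    frob (C3 lam mu (Q * γ0 * Qᵀ)) (Q * γ0 * Qᵀ) =
      frob (Ct lam mu (A * gb)) (gb * A) + z3 ^ 2 * frob (Ct lam mu (A * ρ)) (ρ * A)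
        - 2 * z3 * frob (Ct lam mu (A * gb)) (ρ * A)
        + (α ^ 2 / (lam + 2 * mu)) * π0 ^ 2 := by
  have hne : lam + 2 * mu ≠ 0 := by positivity
  have hA10 : A 1 0 = A 0 1 := hAsym.apply 0 1
  have hρ10 : ρ 1 0 = ρ 0 1 := hρ.apply 0 1
  have hgb10 : gb 1 0 = gb 0 1 := hgb.apply 0 1
  have hγsym : γ0ᵀ = γ0 := by
    subst hγ0 hB
    ext i j
    fin_cases i <;> fin_cases j <;>
      simp [Matrix.transpose_apply, Matrix.sub_apply, Matrix.smul_apply, hρ10, hgb10]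
  set M := Q * γ0 * Qᵀ with hM
  have hMsym : Mᵀ = M := by
    rw [hM]
    simp [Matrix.transpose_mul, Matrix.mul_assoc, hγsym]
  have key1 : M.trace = (bd A * γ0).trace := by
    rw [hM, Matrix.trace_mul_cycle, hQTQ]
  have key2 : (M * M).trace = (bd A * γ0 * (bd A * γ0)).trace := by
    have h1 : M * M = Q * (γ0 * ((Qᵀ * Q) * γ0)) * Qᵀ := by
      rw [hM]; simp only [Matrix.mul_assoc]
    rw [h1, Matrix.trace_mul_cycle, ← Matrix.mul_assoc, hQTQ]
  have hfrob3 : frob (C3 lam mu M) M = lam * M.trace ^ 2 + 2 * mu * (M * M).trace := by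
    unfold frob C3
    rw [hMsym]
    simp [Matrix.add_mul, Matrix.smul_mul, Matrix.trace_add, Matrix.trace_smul]
    ring
  rw [hfrob3, key1, key2]
  subst hγ0 hB
  unfold frob at hg33
  subst hg33
  unfold frob Ct
  simp only [bd, Matrix.trace_fin_three, Matrix.trace_fin_two, Matrix.mul_apply,
    Fin.sum_univ_three, Fin.sum_univ_two, Matrix.add_apply, Matrix.smul_apply,
    Matrix.one_apply, Matrix.sub_apply, Matrix.transpose_apply, Matrix.cons_val',
    Matrix.cons_val_zero, Matrix.cons_val_one, Matrix.head_cons, Matrix.head_fin_const,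
    Matrix.empty_val', Matrix.cons_val_fin_one, smul_eq_mul, Matrix.of_apply, Matrix.cons_val_two, Matrix.tail_cons]
  norm_num [hA10, hρ10, hgb10]
  field_simp
  ring
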